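/- arXiv:1906.09674 — 6 statements merged into one kernel-verified Lean document; each statement's English description precedes it below -/
import Mathlib

section
/- Let m ≥ 2 and λ_1, …, λ_m ∈ ℝ, and set λ_min = min_{i≠j} (λ_j − λ_i). If λ_min ≥ log(m^{1/(m−1)} − 1), then ∑_{i=1}^{m} ∏_{j≠i} 1/(1 + e^{λ_j − λ_i}) ≤ m·(1/(1+e^{λ_min}))^{m−1} ≤ 1. Consequently, setting π(a_i|s) = ∏_{j≠i} 1/(1+e^{λ_j−λ_i}) for i = 1,…,m and assigning a dummy action a' the probability π(a'|s) = 1 − ∑_{i=1}^m π(a_i|s) ≥ 0 yields a valid probability distribution over the augmented action set of size m+1. -/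
open Finset Real

/-!
Every pairwise factor `σ(λ_i − λ_j) = 1 / (1 + e^{λ_j − λ_i})` is at most `1 / (1 + e^{λ_min})`,
so each of the `m` policy values is at most `(1 + e^{λ_min})^{-(m-1)}`. The condition on `λ_min`
says exactly `m^{1/(m-1)} ≤ 1 + e^{λ_min}`, i.e. `m ≤ (1 + e^{λ_min})^{m-1}`, which makes the
bound on the total mass at most `1`.
-/

/-- The pairwise ranking policy `π(a_i | s) = ∏_{j ≠ i} σ(λ_i − λ_j)`. -/
noncomputable def pairwiseRankingPolicy {ι : Type*} [Fintype ι] [DecidableEq ι]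
    (lam : ι → ℝ) (i : ι) : ℝ :=
  ∏ j ∈ univ.erase i, 1 / (1 + exp (lam j - lam i))

section Policy

variable {ι : Type*} [Fintype ι] [DecidableEq ι] {lam : ι → ℝ} {c : ℝ}

lemma pairwiseRankingPolicy_le (hc : ∀ i j, i ≠ j → c ≤ lam j - lam i) (i : ι) :
    pairwiseRankingPolicy lam i ≤ (1 / (1 + exp c)) ^ (Fintype.card ι - 1) := by
  calc pairwiseRankingPolicy lam i
      ≤ ∏ _j ∈ univ.erase i, 1 / (1 + exp c) := by
        refine prod_le_prod (fun j _ => by positivity) fun j hj => ?_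
        gcongr
        exact hc i j (ne_of_mem_erase hj).symm
    _ = (1 / (1 + exp c)) ^ (Fintype.card ι - 1) := by
        rw [prod_const, card_erase_of_mem (mem_univ i), card_univ]

lemma sum_pairwiseRankingPolicy_le (hc : ∀ i j, i ≠ j → c ≤ lam j - lam i) :
    ∑ i, pairwiseRankingPolicy lam i
      ≤ Fintype.card ι * (1 / (1 + exp c)) ^ (Fintype.card ι - 1) := by
  simpa using sum_le_card_nsmul univ _ _ fun i _ => pairwiseRankingPolicy_le hc i

end Policy

lemma le_pow_of_rpow_inv_natCast_le {x t : ℝ} {k : ℕ} (hk : k ≠ 0) (hx : 0 ≤ x) (ht : 0 ≤ t)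
    (h : x ^ (k⁻¹ : ℝ) ≤ t) : x ≤ t ^ k := by
  rw [← rpow_natCast]
  exact (rpow_inv_le_iff_of_pos hx ht (by positivity)).1 h

lemma mul_one_div_one_add_exp_pow_le_one {m : ℕ} (hm : 2 ≤ m) {c : ℝ}
    (hc : log ((m : ℝ) ^ ((1 : ℝ) / ((m : ℝ) - 1)) - 1) ≤ c) :
    (m : ℝ) * (1 / (1 + exp c)) ^ (m - 1) ≤ 1 := by
  have hm_one : (1 : ℝ) < m := by exact_mod_cast hm
  have hcast : (((m - 1 : ℕ) : ℝ))⁻¹ = (1 : ℝ) / ((m : ℝ) - 1) := by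
    rw [Nat.cast_sub (by omega), Nat.cast_one, one_div]
  have hroot : 1 < (m : ℝ) ^ ((1 : ℝ) / ((m : ℝ) - 1)) :=
    (one_lt_rpow_iff_of_pos (by positivity)).2 (Or.inl ⟨hm_one, by simp [hm_one]⟩)
  have hroot_le : (m : ℝ) ^ ((1 : ℝ) / ((m : ℝ) - 1)) ≤ 1 + exp c := by
    linarith [(log_le_iff_le_exp (by linarith)).1 hc]
  have hm_le : (m : ℝ) ≤ (1 + exp c) ^ (m - 1) :=
    le_pow_of_rpow_inv_natCast_le (by omega) (by positivity) (by positivity) (hcast ▸ hroot_le)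
  rw [one_div, inv_pow, ← div_eq_mul_inv, div_le_one (by positivity)]
  exact hm_le

/-- if `λ_min = min_{i≠j}(λ_j − λ_i) ≥ log(m^{1/(m−1)} − 1)` then
`∑_i ∏_{j≠i} 1/(1+e^{λ_j−λ_i}) ≤ m·(1/(1+e^{λ_min}))^{m−1} ≤ 1`, so the pairwise
ranking policy plus a dummy action (with the leftover mass, which is `≥ 0`)
forms a valid probability distribution. -/
theorem stmt_6 (m : ℕ) (hm : 2 ≤ m) (lam : Fin m → ℝ)
    (hne : (Finset.univ.offDiag : Finset (Fin m × Fin m)).Nonempty)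
    (lamMin : ℝ)
    (hdef : lamMin =
      (Finset.univ.offDiag : Finset (Fin m × Fin m)).inf' hne
        (fun ij => lam ij.2 - lam ij.1))
    (hcond : Real.log ((m : ℝ) ^ ((1 : ℝ) / ((m : ℝ) - 1)) - 1) ≤ lamMin) :
    (∑ i : Fin m, ∏ j ∈ Finset.univ.erase i, 1 / (1 + Real.exp (lam j - lam i)))
        ≤ (m : ℝ) * (1 / (1 + Real.exp lamMin)) ^ (m - 1) ∧
    (m : ℝ) * (1 / (1 + Real.exp lamMin)) ^ (m - 1) ≤ 1 ∧
    0 ≤ 1 - ∑ i : Fin m, ∏ j ∈ Finset.univ.erase i,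
        1 / (1 + Real.exp (lam j - lam i)) := by
  have hmin : ∀ i j, i ≠ j → lamMin ≤ lam j - lam i := fun i j hij => by
    rw [hdef]
    exact inf'_le (fun ij : Fin m × Fin m => lam ij.2 - lam ij.1)
      (mem_offDiag.2 ⟨mem_univ i, mem_univ j, hij⟩ : (i, j) ∈ univ.offDiag)
  have hsum : ∑ i, pairwiseRankingPolicy lam i ≤ (m : ℝ) * (1 / (1 + exp lamMin)) ^ (m - 1) := by
    simpa using sum_pairwiseRankingPolicy_le hmin
  have hmass := mul_one_div_one_add_exp_pow_le_one hm hcond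
  exact ⟨hsum, hmass, sub_nonneg.2 (hsum.trans hmass)⟩
end

section
/- Let S, A be finite sets, T ≥ 1, and let 𝒯 be a nonempty finite set of trajectories of horizon T with dynamics probabilities p_d(τ) = p₀(s_1)·∏_{t=1}^{T-1}P(s_{t+1}|s_t,a_t) > 0 for all τ ∈ 𝒯, and a policy π with 0 < π(a_t|s_t) ≤ 1 for every τ ∈ 𝒯 and every t. Let p_θ(τ) = p_d(τ)·∏_{t=1}^{T}π(a_t|s_t) and let p*(s,a) = (1/(|𝒯|·T))·∑_{τ∈𝒯}|{t : (s_t,a_t)=(s,a)}| be the empirical state-action distribution of 𝒯. Then ∑_{τ∈𝒯} p_θ(τ) ≥ |𝒯|·(∏_{τ∈𝒯} p_d(τ))^{1/|𝒯|}·exp(T·L), where L = ∑_{(s,a)} p*(s,a)·log π(a|s) (terms with p*(s,a)=0 taken to be 0). -/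
open Finset

/-- Dynamics probability of a trajectory of horizon `T`:
`p_d(τ) = p₀(s₁) · ∏_{t=1}^{T-1} P(s_{t+1} | s_t, a_t)`. -/
noncomputable def dynProb {S A : Type*} (p₀ : S → ℝ) (P : S × A → S → ℝ) (T : ℕ)
    (τ : ℕ → S × A) : ℝ :=
  p₀ (τ 0).1 * ∏ t ∈ Finset.range (T - 1), P (τ t) (τ (t + 1)).1

/-- Trajectory probability: `p_θ(τ) = p_d(τ) · ∏_{t=1}^{T} π(a_t|s_t)`. -/
noncomputable def trajProb {S A : Type*} (p₀ : S → ℝ) (P : S × A → S → ℝ)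
    (π : S × A → ℝ) (T : ℕ) (τ : ℕ → S × A) : ℝ :=
  dynProb p₀ P T τ * ∏ t ∈ Finset.range T, π (τ t)

/-- Empirical state-action distribution of a finite set of trajectories:
`p*(s,a) = (1/(|𝒯|·T)) ∑_{τ∈𝒯} |{t < T : (s_t,a_t) = (s,a)}|`. -/
noncomputable def empDist {S A : Type*} [DecidableEq S] [DecidableEq A]
    (𝒯 : Finset (ℕ → S × A)) (T : ℕ) (sa : S × A) : ℝ :=
  (∑ τ ∈ 𝒯, (((Finset.range T).filter (fun t => τ t = sa)).card : ℝ)) /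
    ((𝒯.card : ℝ) * (T : ℝ))

/-!
`T · L` is the average over `𝒯` of the per-trajectory log-likelihoods `∑ₜ log π(aₜ|sₜ)`, so
`exp (T · L)` is the geometric mean of the policy factors `∏ₜ π(aₜ|sₜ)`. Multiplied by the
geometric mean of the dynamics probabilities it becomes the geometric mean of the `p_θ(τ)`,
and AM–GM bounds `|𝒯|` times that by their sum.
-/

theorem Finset.sum_card_fiber_mul {ι κ R : Type*} [Fintype κ] [DecidableEq κ] [Semiring R]
    (s : Finset ι) (g : ι → κ) (f : κ → R) :
    ∑ j, (#{i ∈ s | g i = j} : R) * f j = ∑ i ∈ s, f (g i) := by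
  simp only [← sum_fiberwise' s g f, sum_const, nsmul_eq_mul]

theorem natCast_mul_sum_empDist_mul {S A : Type*} [Fintype S] [Fintype A] [DecidableEq S]
    [DecidableEq A] (𝒯 : Finset (ℕ → S × A)) (T : ℕ) (f : S × A → ℝ) :
    (T : ℝ) * ∑ sa, empDist 𝒯 T sa * f sa
      = (∑ τ ∈ 𝒯, ∑ t ∈ range T, f (τ t)) / #𝒯 := by
  rcases eq_or_ne T 0 with rfl | hT
  · simp
  have hcount : ∑ sa, (∑ τ ∈ 𝒯, (#{t ∈ range T | τ t = sa} : ℝ)) * f sa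
      = ∑ τ ∈ 𝒯, ∑ t ∈ range T, f (τ t) := by
    simp only [sum_mul]
    rw [sum_comm]
    exact sum_congr rfl fun τ _ => sum_card_fiber_mul _ τ f
  simp only [empDist, div_mul_eq_mul_div, ← sum_div, hcount]
  field_simp

theorem Real.exp_sum_log_div_eq_prod_rpow {ι : Type*} (s : Finset ι) (x : ι → ℝ)
    (hx : ∀ i ∈ s, 0 < x i) (n : ℝ) :
    Real.exp ((∑ i ∈ s, Real.log (x i)) / n) = ∏ i ∈ s, x i ^ (1 / n) := by
  rw [div_eq_mul_one_div, sum_mul, Real.exp_sum]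
  exact prod_congr rfl fun i hi => (Real.rpow_def_of_pos (hx i hi) _).symm

theorem Real.card_mul_prod_rpow_le_sum {ι : Type*} (s : Finset ι) (z : ι → ℝ)
    (hz : ∀ i ∈ s, 0 ≤ z i) : #s * ∏ i ∈ s, z i ^ (1 / #s : ℝ) ≤ ∑ i ∈ s, z i := by
  rcases s.eq_empty_or_nonempty with rfl | hs
  · simp
  have hcard : (0 : ℝ) < #s := by exact_mod_cast hs.card_pos
  have hw : ∑ _i ∈ s, (1 / #s : ℝ) = 1 := by
    rw [sum_const, nsmul_eq_mul]
    field_simp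
  calc #s * ∏ i ∈ s, z i ^ (1 / #s : ℝ)
      ≤ #s * ∑ i ∈ s, 1 / #s * z i := by
        gcongr
        exact Real.geom_mean_le_arith_mean_weighted s _ z (fun _ _ => by positivity) hw hz
    _ = ∑ i ∈ s, z i := by
        rw [← mul_sum, ← mul_assoc, mul_one_div_cancel hcard.ne', one_mul]

theorem stmt_8_general {S A : Type*} [Fintype S] [Fintype A] [DecidableEq S] [DecidableEq A]
    (T : ℕ) (p₀ : S → ℝ) (P : S × A → S → ℝ) (π : S × A → ℝ)
    (𝒯 : Finset (ℕ → S × A))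
    (hpd : ∀ τ ∈ 𝒯, 0 < dynProb p₀ P T τ)
    (hπ : ∀ τ ∈ 𝒯, ∀ t < T, 0 < π (τ t) ∧ π (τ t) ≤ 1) :
    (𝒯.card : ℝ) * (∏ τ ∈ 𝒯, dynProb p₀ P T τ) ^ ((1 : ℝ) / (𝒯.card : ℝ)) *
        Real.exp ((T : ℝ) * ∑ sa : S × A, empDist 𝒯 T sa * Real.log (π sa))
      ≤ ∑ τ ∈ 𝒯, trajProb p₀ P π T τ := by
  have hπ_pos : ∀ τ ∈ 𝒯, ∀ t ∈ range T, 0 < π (τ t) := fun τ hτ t ht =>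
    (hπ τ hτ t (mem_range.mp ht)).1
  have hpolicy_pos : ∀ τ ∈ 𝒯, 0 < ∏ t ∈ range T, π (τ t) := fun τ hτ =>
    prod_pos (hπ_pos τ hτ)
  have hlog : ∀ τ ∈ 𝒯, ∑ t ∈ range T, Real.log (π (τ t))
      = Real.log (∏ t ∈ range T, π (τ t)) := fun τ hτ =>
    (Real.log_prod fun t ht => (hπ_pos τ hτ t ht).ne').symm
  rw [natCast_mul_sum_empDist_mul, sum_congr rfl hlog,
    Real.exp_sum_log_div_eq_prod_rpow _ _ hpolicy_pos,
    ← Real.finsetProd_rpow _ _ fun τ hτ => (hpd τ hτ).le, mul_assoc, ← prod_mul_distrib]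
  calc (#𝒯 : ℝ) * ∏ τ ∈ 𝒯, dynProb p₀ P T τ ^ (1 / #𝒯 : ℝ)
          * (∏ t ∈ range T, π (τ t)) ^ (1 / #𝒯 : ℝ)
      = #𝒯 * ∏ τ ∈ 𝒯, trajProb p₀ P π T τ ^ (1 / #𝒯 : ℝ) := by
        congr 1
        exact prod_congr rfl fun τ hτ =>
          (Real.mul_rpow (hpd τ hτ).le (hpolicy_pos τ hτ).le).symm
    _ ≤ ∑ τ ∈ 𝒯, trajProb p₀ P π T τ :=
        Real.card_mul_prod_rpow_le_sum _ _ fun τ hτ =>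
          mul_nonneg (hpd τ hτ).le (hpolicy_pos τ hτ).le

/-- the total probability of the trajectory set `𝒯` is bounded
below by `|𝒯|` times the geometric mean of the dynamics probabilities times
`exp(T·L)`, where `L` is the supervised log-likelihood under the empirical
state-action distribution of `𝒯`. -/
theorem stmt_8 {S A : Type*} [Fintype S] [Fintype A] [DecidableEq S] [DecidableEq A]
    (T : ℕ) (hT : 1 ≤ T) (p₀ : S → ℝ) (P : S × A → S → ℝ) (π : S × A → ℝ)
    (𝒯 : Finset (ℕ → S × A)) (h𝒯 : 𝒯.Nonempty)
    (hpd : ∀ τ ∈ 𝒯, 0 < dynProb p₀ P T τ)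
    (hπ : ∀ τ ∈ 𝒯, ∀ t < T, 0 < π (τ t) ∧ π (τ t) ≤ 1) :
    (𝒯.card : ℝ) * (∏ τ ∈ 𝒯, dynProb p₀ P T τ) ^ ((1 : ℝ) / (𝒯.card : ℝ)) *
        Real.exp ((T : ℝ) * ∑ sa : S × A, empDist 𝒯 T sa * Real.log (π sa))
      ≤ ∑ τ ∈ 𝒯, trajProb p₀ P π T τ :=
  stmt_8_general T p₀ P π 𝒯 hpd hπ
end

section
/- Under the setting of the previous lower bound (finite S, A with m = |A|, horizon T, nonempty finite trajectory set 𝒯 with positive dynamics probabilities, policy π with values in (0,1] on 𝒯, empirical state-action distribution p*), suppose additionally there is a classifier h : S → A and η ≥ 0 such that: (i) for every (s,a) with p*(s,a) > 0 and h(s) = a, π(a|s) = 1; (ii) for every (s,a) with p*(s,a) > 0 and h(s) ≠ a, π(a|s) ≥ (1+e)^{1−m}; and (iii) the misclassified mass satisfies ∑_{(s,a): h(s)≠a} p*(s,a) ≤ η. Then ∑_{(s,a)} p*(s,a)·log π(a|s) ≥ η·(1−m)·log(1+e), and consequently ∑_{τ∈𝒯} p_θ(τ) ≥ D·(1+e)^{η(1−m)T},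 where D = |𝒯|·(∏_{τ∈𝒯} p_d(τ))^{1/|𝒯|}. -/
open Finset

/-!
Split the log-likelihood `L = ∑ p* log π` into correctly and incorrectly classified pairs: the
former contribute `0`, the latter at least `(1 - m) log (1 + e)` per unit of mass, and their
mass is at most `η`. Since `|𝒯| T L` is the sum of `log π` over all steps of all trajectories,
the geometric mean over `𝒯` of the policy factors of `p_θ` is
`exp (T L) ≥ (1 + e)^(η (1 - m) T)`, and AM-GM bounds `|𝒯|` times the geometric mean of `p_θ`
by `∑ p_θ`.
-/

namespace Real

theorem card_mul_prod_rpow_one_div_card_le_sum {ι : Type*} (s : Finset ι) (z : ι → ℝ)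
    (hz : ∀ i ∈ s, 0 ≤ z i) :
    (s.card : ℝ) * (∏ i ∈ s, z i) ^ ((1 : ℝ) / s.card) ≤ ∑ i ∈ s, z i := by
  rcases s.eq_empty_or_nonempty with rfl | hs
  · simp
  have hcard : (0 : ℝ) < s.card := by exact_mod_cast hs.card_pos
  have amgm := geom_mean_le_arith_mean s (fun _ ↦ 1) z (fun _ _ ↦ zero_le_one)
    (by simpa using hs.card_pos) hz
  simp only [rpow_one, sum_const, nsmul_eq_mul, mul_one, one_mul] at amgm
  rw [one_div, ← le_div_iff₀' hcard]
  exact amgm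

end Real

theorem mul_log_le_sum_mul_log_of_sum_filter_le {ι : Type*} (s : Finset ι) (w f : ι → ℝ)
    (p : ι → Prop) [DecidablePred p] {b η : ℝ} (hb₀ : 0 < b) (hb₁ : b ≤ 1)
    (hw : ∀ i ∈ s, 0 ≤ w i) (hone : ∀ i ∈ s, 0 < w i → ¬ p i → f i = 1)
    (hlow : ∀ i ∈ s, 0 < w i → p i → b ≤ f i)
    (hmass : ∑ i ∈ s with p i, w i ≤ η) :
    η * Real.log b ≤ ∑ i ∈ s, w i * Real.log (f i) := by
  have hlogb : Real.log b ≤ 0 := Real.log_nonpos hb₀.le hb₁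
  have hgood : ∑ i ∈ s with ¬ p i, w i * Real.log (f i) = 0 := by
    refine sum_eq_zero fun i hi ↦ ?_
    obtain ⟨hi, hpi⟩ := mem_filter.mp hi
    rcases (hw i hi).eq_or_lt with hwi | hwi
    · rw [← hwi, zero_mul]
    · rw [hone i hi hwi hpi, Real.log_one, mul_zero]
  have hbad : ∀ i ∈ s.filter p, w i * Real.log b ≤ w i * Real.log (f i) := by
    intro i hi
    obtain ⟨hi, hpi⟩ := mem_filter.mp hi
    rcases (hw i hi).eq_or_lt with hwi | hwi
    · simp [← hwi]
    · exact mul_le_mul_of_nonneg_left (Real.log_le_log hb₀ (hlow i hi hwi hpi)) hwi.le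
  calc η * Real.log b ≤ (∑ i ∈ s with p i, w i) * Real.log b :=
        mul_le_mul_of_nonpos_right hmass hlogb
    _ = ∑ i ∈ s with p i, w i * Real.log b := sum_mul _ _ _
    _ ≤ ∑ i ∈ s with p i, w i * Real.log (f i) := sum_le_sum hbad
    _ = ∑ i ∈ s, w i * Real.log (f i) := by
      rw [← sum_filter_add_sum_filter_not s p, hgood, add_zero]

theorem sum_card_filter_eq_mul {ι κ : Type*} [Fintype κ] [DecidableEq κ] (s : Finset ι)
    (x : ι → κ) (g : κ → ℝ) :
    ∑ k, (#{i ∈ s | x i = k} : ℝ) * g k = ∑ i ∈ s, g (x i) := by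
  rw [← sum_fiberwise' s x g]
  simp only [sum_const, nsmul_eq_mul]

section Trajectories

variable {S A : Type*} [DecidableEq S] [DecidableEq A]

theorem empDist_nonneg (𝒯 : Finset (ℕ → S × A)) (T : ℕ) (sa : S × A) :
    0 ≤ empDist 𝒯 T sa := by
  unfold empDist
  positivity

theorem card_mul_sum_empDist_mul [Fintype S] [Fintype A] (𝒯 : Finset (ℕ → S × A)) (T : ℕ)
    (g : S × A → ℝ) :
    ((𝒯.card : ℝ) * T) * ∑ sa, empDist 𝒯 T sa * g sa
      = ∑ τ ∈ 𝒯, ∑ t ∈ range T, g (τ t) := by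
  by_cases hnT : (𝒯.card : ℝ) * T = 0
  · rcases mul_eq_zero.mp hnT with hn | hT
    · simp [card_eq_zero.mp (by exact_mod_cast hn)]
    · simp [show T = 0 by exact_mod_cast hT]
  simp only [empDist, mul_sum, div_mul_eq_mul_div, mul_div_cancel₀ _ hnT, sum_mul]
  rw [sum_comm]
  exact sum_congr rfl fun τ _ ↦ sum_card_filter_eq_mul _ τ g

theorem prod_prod_rpow_one_div_card_eq_exp [Fintype S] [Fintype A] (𝒯 : Finset (ℕ → S × A))
    (h𝒯 : 𝒯.Nonempty) (T : ℕ) (π : S × A → ℝ) (hπ : ∀ τ ∈ 𝒯, ∀ t < T, 0 < π (τ t)) :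
    (∏ τ ∈ 𝒯, ∏ t ∈ range T, π (τ t)) ^ ((1 : ℝ) / 𝒯.card)
      = Real.exp (T * ∑ sa, empDist 𝒯 T sa * Real.log (π sa)) := by
  have hcard : (0 : ℝ) < 𝒯.card := by exact_mod_cast h𝒯.card_pos
  have hpos : ∀ τ ∈ 𝒯, ∀ t ∈ range T, 0 < π (τ t) :=
    fun τ hτ t ht ↦ hπ τ hτ t (mem_range.mp ht)
  have hlog : Real.log (∏ τ ∈ 𝒯, ∏ t ∈ range T, π (τ t))
      = ∑ τ ∈ 𝒯, ∑ t ∈ range T, Real.log (π (τ t)) := by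
    rw [Real.log_prod fun τ hτ ↦ (prod_pos (hpos τ hτ)).ne']
    exact sum_congr rfl fun τ hτ ↦ Real.log_prod fun t ht ↦ (hpos τ hτ t ht).ne'
  rw [Real.rpow_def_of_pos (prod_pos fun τ hτ ↦ prod_pos (hpos τ hτ)), hlog,
    ← card_mul_sum_empDist_mul 𝒯 T fun sa ↦ Real.log (π sa)]
  congr 1
  field_simp

end Trajectories

theorem stmt_9_general {S A : Type*} [Fintype S] [Fintype A] [DecidableEq S] [DecidableEq A]
    (T : ℕ) (p₀ : S → ℝ) (P : S × A → S → ℝ) (π : S × A → ℝ)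
    (𝒯 : Finset (ℕ → S × A)) (h𝒯 : 𝒯.Nonempty)
    (hpd : ∀ τ ∈ 𝒯, 0 < dynProb p₀ P T τ)
    (hπ : ∀ τ ∈ 𝒯, ∀ t < T, 0 < π (τ t) ∧ π (τ t) ≤ 1)
    (h : S → A) (η : ℝ)
    (hcorrect : ∀ s a, 0 < empDist 𝒯 T (s, a) → h s = a → π (s, a) = 1)
    (hmis : ∀ s a, 0 < empDist 𝒯 T (s, a) → h s ≠ a →
      (1 + Real.exp 1) ^ ((1 : ℝ) - (Fintype.card A : ℝ)) ≤ π (s, a))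
    (hmass : ∑ sa ∈ Finset.univ.filter (fun sa : S × A => h sa.1 ≠ sa.2),
      empDist 𝒯 T sa ≤ η) :
    η * (1 - (Fintype.card A : ℝ)) * Real.log (1 + Real.exp 1)
        ≤ ∑ sa : S × A, empDist 𝒯 T sa * Real.log (π sa) ∧
    (𝒯.card : ℝ) * (∏ τ ∈ 𝒯, dynProb p₀ P T τ) ^ ((1 : ℝ) / (𝒯.card : ℝ)) *
        (1 + Real.exp 1) ^ (η * (1 - (Fintype.card A : ℝ)) * (T : ℝ))
      ≤ ∑ τ ∈ 𝒯, trajProb p₀ P π T τ := by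
  obtain ⟨τ₀, hτ₀⟩ := h𝒯
  have hm : (1 : ℝ) ≤ Fintype.card A := by
    exact_mod_cast Fintype.card_pos_iff.mpr ⟨(τ₀ 0).2⟩
  have hbase : (1 : ℝ) ≤ 1 + Real.exp 1 := by linarith [Real.exp_pos 1]
  have hlik : η * (1 - (Fintype.card A : ℝ)) * Real.log (1 + Real.exp 1)
      ≤ ∑ sa : S × A, empDist 𝒯 T sa * Real.log (π sa) := by
    rw [mul_assoc, ← Real.log_rpow (by positivity)]
    exact mul_log_le_sum_mul_log_of_sum_filter_le _ _ _ _ (by positivity)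
      (Real.rpow_le_one_of_one_le_of_nonpos hbase (by linarith))
      (fun sa _ ↦ empDist_nonneg 𝒯 T sa)
      (fun sa _ hsa hh ↦ hcorrect sa.1 sa.2 hsa (not_not.mp hh))
      (fun sa _ hsa hh ↦ hmis sa.1 sa.2 hsa hh) hmass
  refine ⟨hlik, ?_⟩
  have hdyn : 0 ≤ ∏ τ ∈ 𝒯, dynProb p₀ P T τ := prod_nonneg fun τ hτ ↦ (hpd τ hτ).le
  have hπpos : ∀ τ ∈ 𝒯, ∀ t < T, 0 < π (τ t) := fun τ hτ t ht ↦ (hπ τ hτ t ht).1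
  have hpol : ∀ τ ∈ 𝒯, 0 ≤ ∏ t ∈ range T, π (τ t) :=
    fun τ hτ ↦ prod_nonneg fun t ht ↦ (hπpos τ hτ t (mem_range.mp ht)).le
  calc _ ≤ (𝒯.card : ℝ) * (∏ τ ∈ 𝒯, dynProb p₀ P T τ) ^ ((1 : ℝ) / 𝒯.card)
        * Real.exp (T * ∑ sa, empDist 𝒯 T sa * Real.log (π sa)) := by
        gcongr
        rw [Real.rpow_def_of_pos (by positivity), Real.exp_le_exp]
        nlinarith [Nat.cast_nonneg (α := ℝ) T]
    _ = (𝒯.card : ℝ) * (∏ τ ∈ 𝒯, trajProb p₀ P π T τ) ^ ((1 : ℝ) / 𝒯.card) := by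
        rw [← prod_prod_rpow_one_div_card_eq_exp 𝒯 ⟨τ₀, hτ₀⟩ T π hπpos, mul_assoc,
          ← Real.mul_rpow hdyn (prod_nonneg hpol),
          ← prod_mul_distrib]
        rfl
    _ ≤ ∑ τ ∈ 𝒯, trajProb p₀ P π T τ :=
        Real.card_mul_prod_rpow_one_div_card_le_sum 𝒯 _
          fun τ hτ ↦ mul_nonneg (hpd τ hτ).le (hpol τ hτ)

/-- if a classifier `h` with misclassified mass at most `η` agrees
with the policy (`π = 1` on correctly classified supported pairs, and
`π ≥ (1+e)^{1−m}` on misclassified supported pairs), then the supervised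
log-likelihood satisfies `L ≥ η(1−m)·log(1+e)`, and consequently
`∑_{τ∈𝒯} p_θ(τ) ≥ D·(1+e)^{η(1−m)T}` with
`D = |𝒯|·(∏_{τ∈𝒯} p_d(τ))^{1/|𝒯|}`. -/
theorem stmt_9 {S A : Type*} [Fintype S] [Fintype A] [DecidableEq S] [DecidableEq A]
    (T : ℕ) (hT : 1 ≤ T) (p₀ : S → ℝ) (P : S × A → S → ℝ) (π : S × A → ℝ)
    (𝒯 : Finset (ℕ → S × A)) (h𝒯 : 𝒯.Nonempty)
    (hpd : ∀ τ ∈ 𝒯, 0 < dynProb p₀ P T τ)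
    (hπ : ∀ τ ∈ 𝒯, ∀ t < T, 0 < π (τ t) ∧ π (τ t) ≤ 1)
    (h : S → A) (η : ℝ) (hη : 0 ≤ η)
    (hcorrect : ∀ s a, 0 < empDist 𝒯 T (s, a) → h s = a → π (s, a) = 1)
    (hmis : ∀ s a, 0 < empDist 𝒯 T (s, a) → h s ≠ a →
      (1 + Real.exp 1) ^ ((1 : ℝ) - (Fintype.card A : ℝ)) ≤ π (s, a))
    (hmass : ∑ sa ∈ Finset.univ.filter (fun sa : S × A => h sa.1 ≠ sa.2),
      empDist 𝒯 T sa ≤ η) :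
    η * (1 - (Fintype.card A : ℝ)) * Real.log (1 + Real.exp 1)
        ≤ ∑ sa : S × A, empDist 𝒯 T sa * Real.log (π sa) ∧
    (𝒯.card : ℝ) * (∏ τ ∈ 𝒯, dynProb p₀ P T τ) ^ ((1 : ℝ) / (𝒯.card : ℝ)) *
        (1 + Real.exp 1) ^ (η * (1 - (Fintype.card A : ℝ)) * (T : ℝ))
      ≤ ∑ τ ∈ 𝒯, trajProb p₀ P π T τ :=
  stmt_9_general T p₀ P π 𝒯 h𝒯 hpd hπ h η hcorrect hmis hmass
end

section
/- Let N ≥ 1 and k ≥ 0 be integers, and let T be a subset of a set of size N with |T| = t. For any integer 0 ≤ i' ≤ t, the number of functions f : {1,…,k} → {1,…,N} whose range contains exactly i' elements of T equals C(t, i')·∑_{j=0}^{i'} (−1)^j·C(i', j)·(N − t + i' − j)^k. Consequently, if k samples are drawn independently and uniformly at random from the N elements, the probability that at least i distinct elements of T are sampled equals 1 − ∑_{i'=0}^{i−1} C(t,i')·[∑_{j=0}^{i'} (−1)^j C(i',j)(N − t + i' − j)^k] / N^k. -/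
/-!
A function `f` satisfies `T ∩ range f = S` (for `S ⊆ T`) exactly when it takes values outside
`T \ S` and covers `S`. Inclusion–exclusion over the part `R ⊆ S` that is missed counts these
functions as `∑_R (-1)^|R| (N - t + |S| - |R|)^k`, a sum depending on `R` only through `|R|`.
Summing over the `C(t, i')` sets `S` of size `i'` gives the exact count, and the probability of
seeing at least `i` elements of `T` is the complement of the cases `|T ∩ range f| = i' < i`.
-/

open Finset

section

variable {α β : Type*} [Fintype α] [Fintype β] [DecidableEq β]

theorem inter_image_eq_iff {S T : Finset β} (hS : S ⊆ T) (f : α → β) :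
    T ∩ univ.image f = S ↔ (∀ a, f a ∈ (T \ S)ᶜ) ∧ S ⊆ univ.image f := by
  constructor
  · rintro rfl
    simp
  · rintro ⟨hf, hSf⟩
    ext b
    simp only [mem_compl, mem_sdiff, not_and_not_right] at hf
    constructor
    · intro hb
      obtain ⟨a, -, rfl⟩ := mem_image.1 (mem_inter.1 hb).2
      exact hf a (mem_inter.1 hb).1
    · intro hb
      exact mem_inter.2 ⟨hS hb, hSf hb⟩

variable [DecidableEq α]

theorem card_filter_forall_mem (C : Finset β) :
    #{f : α → β | ∀ a, f a ∈ C} = #C ^ Fintype.card α := by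
  have : ({f : α → β | ∀ a, f a ∈ C} : Finset _) = Fintype.piFinset fun _ ↦ C := by
    ext; simp [Fintype.mem_piFinset]
  simp [this]

theorem card_filter_forall_mem_and_subset_image (S C : Finset β) :
    (#{f : α → β | (∀ a, f a ∈ C) ∧ S ⊆ univ.image f} : ℤ) =
      ∑ R ∈ S.powerset, (-1) ^ #R * (#(C \ R) : ℤ) ^ Fintype.card α := by
  -- `S ⊆ range f` is the intersection over `b ∈ S` of the complements of `{f | b ∉ range f}`.
  have h := inclusion_exclusion_sum_inf_compl S (fun b ↦ {f : α → β | ∀ a, f a ≠ b})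
    (fun f ↦ if ∀ a, f a ∈ C then (1 : ℤ) else 0)
  simp only [sum_boole, smul_eq_mul] at h
  have hS : ({f : α → β | (∀ a, f a ∈ C) ∧ S ⊆ univ.image f} : Finset _) =
      {f ∈ S.inf fun b ↦ ({f : α → β | ∀ a, f a ≠ b} : Finset _)ᶜ | ∀ a, f a ∈ C} := by
    ext f
    simp [subset_iff, mem_inf, and_comm]
  have hR (R : Finset β) :
      {f ∈ R.inf fun b ↦ ({f : α → β | ∀ a, f a ≠ b} : Finset _) | ∀ a, f a ∈ C} =
        ({f : α → β | ∀ a, f a ∈ C \ R} : Finset _) := by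
    ext f
    simp only [mem_filter, mem_inf, mem_univ, true_and, mem_sdiff, forall_and]
    grind
  rw [hS, h]
  refine sum_congr rfl fun R _ ↦ ?_
  rw [hR, card_filter_forall_mem, Nat.cast_pow]

theorem card_filter_inter_image_eq {S T : Finset β} (hS : S ⊆ T) :
    (#{f : α → β | T ∩ univ.image f = S} : ℤ) =
      ∑ j ∈ range (#S + 1), (-1) ^ j * ((#S).choose j : ℤ) *
        ((Fintype.card β : ℤ) - #T + #S - j) ^ Fintype.card α := by
  have hcompl (R : Finset β) (hR : R ⊆ S) :
      (#((T \ S)ᶜ \ R) : ℤ) = Fintype.card β - #T + #S - #R := by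
    have hRC : R ⊆ (T \ S)ᶜ := fun b hb ↦ by simp [hR hb]
    have := card_sdiff_of_subset hRC
    have := card_compl (T \ S)
    have := card_sdiff_of_subset hS
    have := card_le_card hRC
    have := card_le_univ T
    have := card_le_card hS
    omega
  rw [filter_congr fun f _ ↦ inter_image_eq_iff hS f, card_filter_forall_mem_and_subset_image,
    sum_congr rfl fun R hR ↦ by rw [hcompl R (mem_powerset.1 hR)],
    sum_powerset_apply_card (fun j ↦ (-1) ^ j *
      ((Fintype.card β : ℤ) - #T + #S - j) ^ Fintype.card α)]
  refine sum_congr rfl fun j _ ↦ ?_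
  rw [nsmul_eq_mul]
  ring

theorem card_filter_card_inter_image_eq (T : Finset β) (i : ℕ) :
    (#{f : α → β | #(T ∩ univ.image f) = i} : ℤ) =
      ((#T).choose i : ℤ) * ∑ j ∈ range (i + 1), (-1) ^ j * (i.choose j : ℤ) *
        ((Fintype.card β : ℤ) - #T + i - j) ^ Fintype.card α := by
  have : ({f : α → β | #(T ∩ univ.image f) = i} : Finset _) =
      ({f : α → β | T ∩ univ.image f ∈ powersetCard i T} : Finset _) := by
    ext f
    simp [mem_powersetCard]
  rw [this, ← sum_card_fiberwise_eq_card_filter, Nat.cast_sum,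
    sum_congr rfl fun S hS ↦ ?_, sum_const, card_powersetCard, nsmul_eq_mul]
  obtain ⟨hST, rfl⟩ := mem_powersetCard.1 hS
  exact card_filter_inter_image_eq hST

end

theorem card_filter_le_add_sum_card_filter_eq {ι : Type*} (s : Finset ι) (g : ι → ℕ) (i : ℕ) :
    #{x ∈ s | i ≤ g x} + ∑ i' ∈ range i, #{x ∈ s | g x = i'} = #s := by
  rw [sum_card_fiberwise_eq_card_filter]
  simp only [mem_range, ← not_le]
  exact card_filter_add_card_filter_not _

/-- by inclusion–exclusion, the number of functions
`f : Fin k → Fin N` whose range contains exactly `i'` elements of `T` equals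
`C(t,i')·∑_{j=0}^{i'} (−1)^j C(i',j)(N−t+i'−j)^k`; consequently the probability
of sampling at least `i` distinct elements of `T` in `k` uniform draws equals
`1 − ∑_{i'=0}^{i−1} C(t,i')·[∑_j (−1)^j C(i',j)(N−t+i'−j)^k]/N^k`. -/
theorem stmt_12 (N k : ℕ) (hN : 1 ≤ N) (Tset : Finset (Fin N)) (i : ℕ) :
    (∀ i' : ℕ, i' ≤ Tset.card →
      ((Finset.univ.filter (fun f : Fin k → Fin N =>
          (Tset.filter (fun x => x ∈ Finset.image f Finset.univ)).card = i')).card : ℤ)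
        = (Tset.card.choose i' : ℤ) *
            ∑ j ∈ Finset.range (i' + 1),
              (-1 : ℤ) ^ j * (i'.choose j : ℤ) *
                ((N : ℤ) - (Tset.card : ℤ) + (i' : ℤ) - (j : ℤ)) ^ k) ∧
    (((Finset.univ.filter (fun f : Fin k → Fin N =>
          i ≤ (Tset.filter (fun x => x ∈ Finset.image f Finset.univ)).card)).card : ℝ) /
        (N : ℝ) ^ k
      = 1 - ∑ i' ∈ Finset.range i,
          ((Tset.card.choose i' : ℝ) *
            ∑ j ∈ Finset.range (i' + 1),
              (-1 : ℝ) ^ j * (i'.choose j : ℝ) *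
                ((N : ℝ) - (Tset.card : ℝ) + (i' : ℝ) - (j : ℝ)) ^ k) / (N : ℝ) ^ k) := by
  simp only [filter_mem_eq_inter]
  have hexact (i' : ℕ) := card_filter_card_inter_image_eq (α := Fin k) Tset i'
  simp only [Fintype.card_fin] at hexact
  refine ⟨fun i' _ ↦ hexact i', ?_⟩
  have hsplit := card_filter_le_add_sum_card_filter_eq univ (fun f : Fin k → Fin N ↦
    #(Tset ∩ univ.image f)) i
  rw [card_univ, Fintype.card_fun, Fintype.card_fin, Fintype.card_fin] at hsplit
  rw [← Nat.cast_inj (R := ℤ), Nat.cast_add, Nat.cast_sum,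
    sum_congr rfl fun i' _ ↦ hexact i'] at hsplit
  have hNk : (N : ℝ) ^ k ≠ 0 := pow_ne_zero _ (Nat.cast_ne_zero.2 (by omega))
  rw [eq_sub_iff_add_eq, ← sum_div, ← add_div, div_eq_one_iff_eq hNk]
  exact_mod_cast hsplit
end

section
/- Let m ≥ 1 and let φ_1, …, φ_m be positive real numbers. For a permutation σ of {1,…,m}, define the Plackett–Luce permutation probability P(σ) = ∏_{t=1}^{m} φ_{σ(t)} / (∑_{l=t}^{m} φ_{σ(l)}). Then for every index i, the top-one probability equals the softmax value: ∑_{σ : σ(1) = i} P(σ) = φ_i / (∑_{j=1}^{m} φ_j). In particular, with φ_j = exp(λ_j) for action values λ_1,…,λ_m, the probability that action i is ranked on top of the list is e^{λ_i}/∑_{j=1}^m e^{λ_j}. -/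
/-!
Split a permutation `σ` of `Fin (n + 1)` as `Equiv.Perm.decomposeFin` does: its top item
`p = σ 0` and a permutation `τ` of the remaining items, labelled by `Fin n` through
`y ↦ swap 0 p y.succ`. The first Plackett–Luce factor is `φ p / ∑ j, φ j`, and the other `n`
factors are exactly the Plackett–Luce probability of `τ` for the weights of the remaining items.
Hence the probabilities sum to `1` (induction on `n`), and the probabilities of the permutations
with top item `i` sum to `φ i / ∑ j, φ j` times such a total, i.e. to the softmax.
-/

open Finset Equiv

noncomputable def plackettLuce {K : Type*} [Field K] {n : ℕ} (φ : Fin n → K) (σ : Perm (Fin n)) :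
    K :=
  ∏ t, φ (σ t) / ∑ l ∈ Ici t, φ (σ l)

section

variable {K : Type*} [Field K]

theorem plackettLuce_decomposeFin_symm {n : ℕ} (φ : Fin (n + 1) → K) (p : Fin (n + 1))
    (τ : Perm (Fin n)) :
    plackettLuce φ (Perm.decomposeFin.symm (p, τ)) =
      (φ p / ∑ j, φ j) * plackettLuce (fun y => φ (swap 0 p y.succ)) τ := by
  have h_zero : Perm.decomposeFin.symm (p, τ) 0 = p := Perm.decomposeFin_symm_apply_zero p τ
  have h_succ (y : Fin n) : Perm.decomposeFin.symm (p, τ) y.succ = swap 0 p (τ y).succ :=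
    Perm.decomposeFin_symm_apply_succ τ p y
  have h_Ici_zero : Ici (0 : Fin (n + 1)) = univ := Ici_bot
  rw [plackettLuce, Fin.prod_univ_succ, h_zero, h_Ici_zero, Equiv.sum_comp]
  congr 1
  refine prod_congr rfl fun x _ => ?_
  simp only [h_succ, Fin.sum_Ici_succ]

theorem sum_plackettLuce_decomposeFin_symm {n : ℕ} (φ : Fin (n + 1) → K) (p : Fin (n + 1)) :
    ∑ τ, plackettLuce φ (Perm.decomposeFin.symm (p, τ)) =
      (φ p / ∑ j, φ j) * ∑ τ, plackettLuce (fun y => φ (swap 0 p y.succ)) τ := by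
  simp only [plackettLuce_decomposeFin_symm, mul_sum]

end

section

variable {K : Type*} [Field K] [LinearOrder K] [IsStrictOrderedRing K]

theorem sum_plackettLuce {n : ℕ} (φ : Fin n → K) (hφ : ∀ j, 0 < φ j) :
    ∑ σ, plackettLuce φ σ = 1 := by
  induction n with
  | zero => simp [plackettLuce]
  | succ n ih =>
    have h_total : ∑ j, φ j ≠ 0 := (sum_pos (fun j _ => hφ j) univ_nonempty).ne'
    rw [← Equiv.sum_comp Perm.decomposeFin.symm, Fintype.sum_prod_type]
    simp only [sum_plackettLuce_decomposeFin_symm, ih _ fun y => hφ _, mul_one]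
    rw [← sum_div, div_self h_total]

theorem sum_plackettLuce_filter_apply_zero {n : ℕ} (φ : Fin (n + 1) → K) (hφ : ∀ j, 0 < φ j)
    (i : Fin (n + 1)) :
    ∑ σ ∈ univ.filter (fun σ : Perm (Fin (n + 1)) => σ 0 = i), plackettLuce φ σ =
      φ i / ∑ j, φ j := by
  rw [sum_filter, ← Equiv.sum_comp Perm.decomposeFin.symm, Fintype.sum_prod_type]
  simp only [Perm.decomposeFin_symm_apply_zero, sum_ite_irrel, sum_const_zero, sum_ite_eq',
    mem_univ, if_true]
  rw [sum_plackettLuce_decomposeFin_symm, sum_plackettLuce _ fun y => hφ _, mul_one]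

end

/-- Top-one probability in the Plackett–Luce model: the total
probability of all permutations ranking item `i` first equals the softmax value
`φ_i / ∑_j φ_j`; in particular with `φ_j = exp(λ_j)` the top-one probability is
`e^{λ_i}/∑_j e^{λ_j}`. -/
theorem stmt_13 (m : ℕ) (hm : 1 ≤ m) (φ : Fin m → ℝ) (hφ : ∀ j, 0 < φ j)
    (i : Fin m) :
    (∑ σ ∈ Finset.univ.filter (fun σ : Equiv.Perm (Fin m) => σ ⟨0, hm⟩ = i),
        ∏ t : Fin m, φ (σ t) / ∑ l ∈ Finset.Ici t, φ (σ l))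
      = φ i / ∑ j, φ j ∧
    ∀ lam : Fin m → ℝ,
      (∑ σ ∈ Finset.univ.filter (fun σ : Equiv.Perm (Fin m) => σ ⟨0, hm⟩ = i),
          ∏ t : Fin m, Real.exp (lam (σ t)) / ∑ l ∈ Finset.Ici t, Real.exp (lam (σ l)))
        = Real.exp (lam i) / ∑ j, Real.exp (lam j) := by
  obtain ⟨n, rfl⟩ : ∃ n, m = n + 1 := ⟨m - 1, by omega⟩
  exact ⟨sum_plackettLuce_filter_apply_zero φ hφ i,
    fun lam => sum_plackettLuce_filter_apply_zero _ (fun j => Real.exp_pos (lam j)) i⟩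
end

section
/- Let S and A be finite sets with |A| = m, T ≥ 1, d ≥ 1, and let λ : ℝ^d × S × A → ℝ be differentiable in its first argument at θ₀. Define the softmax (listwise ranking) policy π_θ(a|s) = exp(λ(θ,s,a)) / ∑_{a'∈A} exp(λ(θ,s,a')), and for each trajectory τ = ((s_1,a_1),…,(s_T,a_T)) ∈ (S×A)^T let p_θ(τ) = c(τ)·∏_{t=1}^{T} π_θ(a_t|s_t), where c(τ) = p₀(s_1)·∏_{t=1}^{T-1}P(s_{t+1}|s_t,a_t) ≥ 0 does not depend on θ. Then J(θ) = ∑_{τ∈(S×A)^T} p_θ(τ)·r(τ) is differentiable at θ₀ and ∇_θ J(θ₀) = ∑_{τ} p_{θ₀}(τ)·(∑_{t=1}^{T} ∇_θ[log π_θ(a_t|s_t)]|_{θ=θ₀})·r(τ), i.e. ∇_θ J(θ₀) = ∑_{τ} p_{θ₀}(τ)·(∑_{t=1}^{T} ∇_θ[λ(θ,s_t,a_t) − log ∑_{a'} e^{λ(θ,s_t,a')}]|_{θ=θ₀})·r(τ). -/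
open Finset

/-- Softmax (listwise ranking) policy built from relative action values. -/
noncomputable def softmaxPolicy {S A : Type*} [Fintype A] {d : ℕ}
    (lam : (Fin d → ℝ) → S → A → ℝ) (θ : Fin d → ℝ) (s : S) (a : A) : ℝ :=
  Real.exp (lam θ s a) / ∑ a' : A, Real.exp (lam θ s a')

/-!
The likelihood-ratio trick: a product of nonvanishing differentiable factors has derivative
`(∏ᵢ fᵢ) • ∑ᵢ d(log fᵢ)`, since `d(log fᵢ) = fᵢ⁻¹ • dfᵢ`. Applied to the trajectory probabilities
`p_θ(τ) = c(τ) ∏ₜ π_θ(aₜ|sₜ)`, whose softmax factors are positive, this turns `∇J` into the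
`p_θ`-weighted sum of the scores `∑ₜ ∇ log π_θ(aₜ|sₜ)`, and `log π = λ - log ∑ e^λ`.
-/

section LogDeriv

variable {ι E : Type*} [NormedAddCommGroup E] [NormedSpace ℝ E] {f : ι → E → ℝ} {x : E}

theorem hasFDerivAt_finset_prod_logDeriv (s : Finset ι)
    (hf : ∀ i ∈ s, DifferentiableAt ℝ (f i) x) (hf₀ : ∀ i ∈ s, f i x ≠ 0) :
    HasFDerivAt (fun y => ∏ i ∈ s, f i y)
      ((∏ i ∈ s, f i x) • ∑ i ∈ s, fderiv ℝ (fun y => Real.log (f i y)) x) x := by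
  classical
  refine (HasFDerivAt.finsetProd fun i hi => (hf i hi).hasFDerivAt).congr_fderiv ?_
  rw [smul_sum]
  refine sum_congr rfl fun i hi => ?_
  have hlog : fderiv ℝ (fun y => Real.log (f i y)) x = (f i x)⁻¹ • fderiv ℝ (f i) x :=
    ((hf i hi).hasFDerivAt.log (hf₀ i hi)).fderiv
  rw [hlog, smul_smul, ← mul_prod_erase s (fun j => f j x) hi, mul_comm (f i x),
    mul_assoc, mul_inv_cancel₀ (hf₀ i hi), mul_one]

theorem hasFDerivAt_sum_prod_mul_score {Ω : Type*} [Fintype Ω] [Fintype ι]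
    (c r : Ω → ℝ) {g : Ω → ι → E → ℝ}
    (hg : ∀ ω i, DifferentiableAt ℝ (g ω i) x) (hg₀ : ∀ ω i, g ω i x ≠ 0) :
    HasFDerivAt (fun y => ∑ ω, (c ω * ∏ i, g ω i y) * r ω)
      (∑ ω, ((c ω * ∏ i, g ω i x) * r ω) •
        ∑ i, fderiv ℝ (fun y => Real.log (g ω i y)) x) x := by
  refine HasFDerivAt.fun_sum fun ω _ => ?_
  have hprod := hasFDerivAt_finset_prod_logDeriv (f := g ω) univ
    (fun i _ => hg ω i) (fun i _ => hg₀ ω i)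
  refine ((hprod.const_mul (c ω)).mul_const (r ω)).congr_fderiv ?_
  rw [smul_smul, smul_smul]
  congr 1
  ring

end LogDeriv

section Softmax

variable {S A : Type*} [Fintype A] {d : ℕ} (lam : (Fin d → ℝ) → S → A → ℝ)

theorem sum_exp_pos [Nonempty A] (θ : Fin d → ℝ) (s : S) :
    0 < ∑ a' : A, Real.exp (lam θ s a') :=
  sum_pos (fun _ _ => Real.exp_pos _) univ_nonempty

theorem softmaxPolicy_pos [Nonempty A] (θ : Fin d → ℝ) (s : S) (a : A) :
    0 < softmaxPolicy lam θ s a :=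
  div_pos (Real.exp_pos _) (sum_exp_pos lam θ s)

theorem log_softmaxPolicy [Nonempty A] (θ : Fin d → ℝ) (s : S) (a : A) :
    Real.log (softmaxPolicy lam θ s a) =
      lam θ s a - Real.log (∑ a' : A, Real.exp (lam θ s a')) := by
  rw [softmaxPolicy, Real.log_div (Real.exp_ne_zero _) (sum_exp_pos lam θ s).ne',
    Real.log_exp]

theorem differentiableAt_softmaxPolicy [Nonempty A] {θ₀ : Fin d → ℝ} {s : S}
    (hdiff : ∀ a, DifferentiableAt ℝ (fun θ => lam θ s a) θ₀) (a : A) :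
    DifferentiableAt ℝ (fun θ => softmaxPolicy lam θ s a) θ₀ := by
  simp only [softmaxPolicy, div_eq_mul_inv]
  exact (hdiff a).exp.mul
    ((DifferentiableAt.fun_sum fun a' _ => (hdiff a').exp).inv (sum_exp_pos lam θ₀ s).ne')

end Softmax

theorem stmt_15_general {S A : Type*} [Fintype S] [Fintype A] [Nonempty A]
    (T d : ℕ)
    (lam : (Fin d → ℝ) → S → A → ℝ) (θ₀ : Fin d → ℝ)
    (hdiff : ∀ s a, DifferentiableAt ℝ (fun θ => lam θ s a) θ₀)
    (c : (Fin T → S × A) → ℝ)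
    (r : (Fin T → S × A) → ℝ) :
    DifferentiableAt ℝ
      (fun θ => ∑ τ : Fin T → S × A,
        (c τ * ∏ t, softmaxPolicy lam θ (τ t).1 (τ t).2) * r τ) θ₀ ∧
    fderiv ℝ
      (fun θ => ∑ τ : Fin T → S × A,
        (c τ * ∏ t, softmaxPolicy lam θ (τ t).1 (τ t).2) * r τ) θ₀
      = ∑ τ : Fin T → S × A,
          ((c τ * ∏ t, softmaxPolicy lam θ₀ (τ t).1 (τ t).2) * r τ) •
            ∑ t : Fin T,
              fderiv ℝ (fun θ => Real.log (softmaxPolicy lam θ (τ t).1 (τ t).2)) θ₀ ∧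
    fderiv ℝ
      (fun θ => ∑ τ : Fin T → S × A,
        (c τ * ∏ t, softmaxPolicy lam θ (τ t).1 (τ t).2) * r τ) θ₀
      = ∑ τ : Fin T → S × A,
          ((c τ * ∏ t, softmaxPolicy lam θ₀ (τ t).1 (τ t).2) * r τ) •
            ∑ t : Fin T,
              fderiv ℝ (fun θ =>
                lam θ (τ t).1 (τ t).2 -
                  Real.log (∑ a' : A, Real.exp (lam θ (τ t).1 a'))) θ₀ := by
  have hJ := hasFDerivAt_sum_prod_mul_score c r
    (g := fun τ t θ => softmaxPolicy lam θ (τ t).1 (τ t).2)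
    (fun τ t => differentiableAt_softmaxPolicy lam (hdiff (τ t).1) (τ t).2)
    (fun τ t => (softmaxPolicy_pos lam θ₀ (τ t).1 (τ t).2).ne')
  refine ⟨hJ.differentiableAt, hJ.fderiv, ?_⟩
  simp only [hJ.fderiv, log_softmaxPolicy]

/-- Listwise Policy Gradient Theorem: for the softmax policy
`π_θ(a|s) = e^{λ(θ,s,a)}/∑_{a'} e^{λ(θ,s,a')}` and trajectory probabilities
`p_θ(τ) = c(τ)·∏_t π_θ(a_t|s_t)`, the return `J(θ) = ∑_τ p_θ(τ)·r(τ)` is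
differentiable and its gradient is the expected sum over time of the gradient of
the log-softmax probabilities weighted by `r(τ)`. -/
theorem stmt_15 {S A : Type*} [Fintype S] [Fintype A] [Nonempty A]
    (T d : ℕ) (hT : 1 ≤ T) (hd : 1 ≤ d)
    (lam : (Fin d → ℝ) → S → A → ℝ) (θ₀ : Fin d → ℝ)
    (hdiff : ∀ s a, DifferentiableAt ℝ (fun θ => lam θ s a) θ₀)
    (c : (Fin T → S × A) → ℝ) (hc : ∀ τ, 0 ≤ c τ)
    (r : (Fin T → S × A) → ℝ) :
    DifferentiableAt ℝ
      (fun θ => ∑ τ : Fin T → S × A,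
        (c τ * ∏ t, softmaxPolicy lam θ (τ t).1 (τ t).2) * r τ) θ₀ ∧
    fderiv ℝ
      (fun θ => ∑ τ : Fin T → S × A,
        (c τ * ∏ t, softmaxPolicy lam θ (τ t).1 (τ t).2) * r τ) θ₀
      = ∑ τ : Fin T → S × A,
          ((c τ * ∏ t, softmaxPolicy lam θ₀ (τ t).1 (τ t).2) * r τ) •
            ∑ t : Fin T,
              fderiv ℝ (fun θ => Real.log (softmaxPolicy lam θ (τ t).1 (τ t).2)) θ₀ ∧
    fderiv ℝ
      (fun θ => ∑ τ : Fin T → S × A,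
        (c τ * ∏ t, softmaxPolicy lam θ (τ t).1 (τ t).2) * r τ) θ₀
      = ∑ τ : Fin T → S × A,
          ((c τ * ∏ t, softmaxPolicy lam θ₀ (τ t).1 (τ t).2) * r τ) •
            ∑ t : Fin T,
              fderiv ℝ (fun θ =>
                lam θ (τ t).1 (τ t).2 -
                  Real.log (∑ a' : A, Real.exp (lam θ (τ t).1 a'))) θ₀ :=
  stmt_15_general T d lam θ₀ hdiff c r
end
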